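/- Under the hypotheses of Proposition 7 (i.e. S_ζ = S^{k+1}_ζ for ζ ∈ X^+_k), one has the closed formula: for k ≥ 0 and ζ ∈ X^+_k, S_ζ = Σ_{μ_0, μ_1, …, μ_k ∈ X^{++}} x_{μ_k, ζ^k} · x_{μ_{k−1}, ζ^{k−1}+pμ_k} ⋯ x_{μ_1, ζ^1+pμ_2} · x_{μ_0, ζ^0+pμ_1} · S⁰_{μ_0}. -/

import Mathlib

open Finset

/-- Base-`p` digit number `k` of a weight `ζ ∈ ℤ^I` (coordinatewise). -/
def digit (p k : ℕ) {I : Type*} (ζ : I → ℤ) : I → ℤ :=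
  fun i => (ζ i / (p : ℤ) ^ k) % (p : ℤ)

/-- The truncated tail `ζ^j + p ζ^{j+1} + p² ζ^{j+2} + ⋯` of the base-`p` expansion. -/
noncomputable def tailFrom (p j : ℕ) {I : Type*} (ζ : I → ℤ) : I → ℤ :=
  fun i => ∑ᶠ k : ℕ, (p : ℤ) ^ k * digit p (j + k) ζ i

/-- Dominant weights `X^+`. -/
def dominant {I : Type*} (ζ : I → ℤ) : Prop := ∀ i, 0 ≤ ζ i

/-- Strictly dominant weights `X^{++} = X^+ + ρ`. -/
def strictDom {I : Type*} (ζ : I → ℤ) : Prop := ∀ i, 1 ≤ ζ i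

/-- `p`-restricted weights `X^+_red`. -/
def restricted (p : ℕ) {I : Type*} (ζ : I → ℤ) : Prop :=
  ∀ i, 0 ≤ ζ i ∧ ζ i ≤ (p : ℤ) - 1

/-- The Weyl vector `ρ` (all coordinates equal to `1` in fundamental weight coordinates). -/
def rho {I : Type*} : I → ℤ := fun _ => 1

/-- The Frobenius twist `ξ ↦ ξ^{(h)}`, sending `e^λ` to `e^{p^h λ}`, as a ring
homomorphism of the group ring `ℤ[X]`, `X = ℤ^I`. -/
noncomputable def twist (p h : ℕ) {I : Type*} :
    AddMonoidAlgebra ℤ (I → ℤ) →+* AddMonoidAlgebra ℤ (I → ℤ) :=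
  AddMonoidAlgebra.mapDomainRingHom ℤ
    (AddMonoidHom.mk' (fun l => ((p : ℤ) ^ h) • l) (fun a b => smul_add _ a b))

/-- The functions `S^h` of no. 4 of the paper, defined inductively from `S¹` by
`S^h_ζ = Σ_{μ ∈ X^{++}} x_{μ, ζ^{h−1}+pζ^h+⋯} · S^{h−1}_{ζ^0+pζ^1+⋯+p^{h−2}ζ^{h−2}+p^{h−1}μ}`,
where `x_{μ,ζ}` are the coefficients of `S¹` in the basis `S⁰` (extended by zero off
`X^{++}`); by convention `S^0 := S¹`. -/
noncomputable def Sh {I : Type*} (p : ℕ) (x : (I → ℤ) → (I → ℤ) → ℤ)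
    (S1 : (I → ℤ) → AddMonoidAlgebra ℤ (I → ℤ)) :
    ℕ → (I → ℤ) → AddMonoidAlgebra ℤ (I → ℤ)
  | 0 => S1
  | 1 => S1
  | (h + 2) => fun ζ => ∑ᶠ μ : I → ℤ, x μ (tailFrom p (h + 1) ζ) •
      Sh p x S1 (h + 1)
        ((∑ j ∈ Finset.range (h + 1), (p : ℤ) ^ j • digit p j ζ) + (p : ℤ) ^ (h + 1) • μ)

/-!
Induction on `k`, for every dominant `ζ` whose tail `ζ^k + p ζ^{k+1} + ⋯` is strictly dominant.
For `k = 0` the tail is `ζ` itself and the formula is the expansion of `S¹_ζ` in the `S⁰_μ`.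
One step of the recursion writes `S^{k+2}_ζ` as `Σ_ν x_{ν, tail} S^{k+1}_{ζ'}` with
`ζ' = ζ^0 + ⋯ + p^k ζ^k + p^{k+1} ν`. This `ζ'` has the same digits `ζ^0, …, ζ^{k-1}` as `ζ` and
`k`-th tail `ζ^k + p ν`, so the induction hypothesis applies to it, and the double sum over `ν`
and `(μ_0, …, μ_k)` is the sum over `(μ_0, …, μ_k, ν)`. For `ζ ∈ X^+_k` the tail is the top digit
`ζ^k`.
-/

namespace Int

theorem emod_pow_succ {b : ℤ} (hb : 0 < b) (a : ℤ) (N : ℕ) :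
    a % b ^ (N + 1) = a % b ^ N + b ^ N * (a / b ^ N % b) := by
  have hbN : 0 < b ^ N := pow_pos hb N
  have hsplit : a = (a % b ^ N + b ^ N * (a / b ^ N % b)) + b ^ (N + 1) * (a / b ^ (N + 1)) := by
    have h1 := Int.emod_add_mul_ediv a (b ^ N)
    have h2 := Int.emod_add_mul_ediv (a / b ^ N) b
    rw [Int.ediv_ediv_of_nonneg hbN.le, ← pow_succ] at h2
    linear_combination -h1 - b ^ N * h2
  have hlo : 0 ≤ a % b ^ N + b ^ N * (a / b ^ N % b) :=
    add_nonneg (Int.emod_nonneg _ hbN.ne') (mul_nonneg hbN.le (Int.emod_nonneg _ hb.ne'))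
  have hhi : a % b ^ N + b ^ N * (a / b ^ N % b) < b ^ (N + 1) := by
    have h1 := Int.emod_lt_of_pos a hbN
    have h2 := Int.emod_lt_of_pos (a / b ^ N) hb
    rw [pow_succ]
    nlinarith
  conv_lhs => rw [hsplit]
  rw [Int.add_mul_emod_self_left, Int.emod_eq_of_lt hlo hhi]

theorem ediv_pow_emod {b : ℤ} (hb : 0 < b) (a : ℤ) (j : ℕ) :
    a / b ^ j % b = a % b ^ (j + 1) / b ^ j := by
  have hbj : 0 < b ^ j := pow_pos hb j
  rw [emod_pow_succ hb, Int.add_mul_ediv_left _ _ hbj.ne',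
    Int.ediv_eq_zero_of_lt (Int.emod_nonneg _ hbj.ne') (Int.emod_lt_of_pos _ hbj), zero_add]

theorem sum_range_pow_mul_ediv_pow_emod {b : ℤ} (hb : 0 < b) (a : ℤ) (N : ℕ) :
    ∑ j ∈ Finset.range N, b ^ j * (a / b ^ j % b) = a % b ^ N := by
  induction N with
  | zero => simp
  | succ N ih => rw [Finset.sum_range_succ, ih, emod_pow_succ hb]

theorem finsum_pow_mul_ediv_pow_emod {b : ℤ} (hb : 1 < b) {a : ℤ} (ha : 0 ≤ a) :
    ∑ᶠ j : ℕ, b ^ j * (a / b ^ j % b) = a := by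
  obtain ⟨N, hN⟩ := pow_unbounded_of_one_lt a hb
  have hsupp : (Function.support fun j : ℕ => b ^ j * (a / b ^ j % b)) ⊆ Finset.range N := by
    intro j hj
    by_contra hjN
    have hNj : b ^ N ≤ b ^ j := pow_le_pow_right₀ hb.le (by simpa using hjN)
    exact hj (by simp [Int.ediv_eq_zero_of_lt ha (hN.trans_le hNj)])
  rw [finsum_eq_finsetSum_of_support_subset _ hsupp, sum_range_pow_mul_ediv_pow_emod (by omega),
    Int.emod_eq_of_lt ha hN]

theorem emod_pow_add_pow_mul_ediv_pow_emod {b : ℤ} (hb : 0 < b) (a c : ℤ) {j n : ℕ}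
    (hjn : j < n) : (a % b ^ n + b ^ n * c) / b ^ j % b = a / b ^ j % b := by
  obtain ⟨m, hm⟩ : b ^ (j + 1) ∣ b ^ n := pow_dvd_pow b hjn
  rw [ediv_pow_emod hb, ediv_pow_emod hb, hm, mul_assoc, Int.add_mul_emod_self_left, ← hm,
    Int.emod_emod_of_dvd _ (pow_dvd_pow b hjn)]

theorem emod_pow_succ_add_pow_succ_mul_ediv_pow {b : ℤ} (hb : 0 < b) (a c : ℤ) (k : ℕ) :
    (a % b ^ (k + 1) + b ^ (k + 1) * c) / b ^ k = a / b ^ k % b + b * c := by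
  rw [pow_succ b k, mul_assoc, Int.add_mul_ediv_left _ _ (pow_pos hb k).ne', ← pow_succ,
    ediv_pow_emod hb]

end Int

section Digits

variable {I : Type*} {p : ℕ}

theorem sum_range_pow_smul_digit (hp : 0 < p) (ζ : I → ℤ) (n : ℕ) :
    ∑ j ∈ range n, (p : ℤ) ^ j • digit p j ζ = fun i => ζ i % (p : ℤ) ^ n := by
  funext i
  simp only [Finset.sum_apply, Pi.smul_apply, smul_eq_mul, digit]
  exact Int.sum_range_pow_mul_ediv_pow_emod (by exact_mod_cast hp) _ n

theorem tailFrom_eq_ediv (hp : 2 ≤ p) {ζ : I → ℤ} (hζ : dominant ζ) (j : ℕ) :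
    tailFrom p j ζ = fun i => ζ i / (p : ℤ) ^ j := by
  have hp' : (1 : ℤ) < p := by omega
  funext i
  have hdigit : ∀ m, digit p (j + m) ζ i = ζ i / (p : ℤ) ^ j / (p : ℤ) ^ m % p := fun m => by
    rw [digit, Int.ediv_ediv_of_nonneg (by positivity), ← pow_add]
  simp only [tailFrom, hdigit]
  exact Int.finsum_pow_mul_ediv_pow_emod hp' (Int.ediv_nonneg (hζ i) (by positivity))

theorem tailFrom_eq_digit {ζ : I → ℤ} {k : ℕ} (hzero : ∀ j, k < j → digit p j ζ = 0) :
    tailFrom p k ζ = digit p k ζ := by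
  funext i
  rw [tailFrom, finsum_eq_single _ 0 fun m hm => by simp [hzero (k + m) (by omega)]]
  simp

def replaceTail (p k : ℕ) (ζ ν : I → ℤ) : I → ℤ :=
  (∑ j ∈ range (k + 1), (p : ℤ) ^ j • digit p j ζ) + (p : ℤ) ^ (k + 1) • ν

theorem replaceTail_apply (hp : 0 < p) (k : ℕ) (ζ ν : I → ℤ) (i : I) :
    replaceTail p k ζ ν i = ζ i % (p : ℤ) ^ (k + 1) + (p : ℤ) ^ (k + 1) * ν i := by
  rw [replaceTail, Pi.add_apply, sum_range_pow_smul_digit hp, Pi.smul_apply, smul_eq_mul]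

theorem dominant_replaceTail (hp : 0 < p) (k : ℕ) (ζ : I → ℤ) {ν : I → ℤ} (hν : dominant ν) :
    dominant (replaceTail p k ζ ν) := fun i => by
  rw [replaceTail_apply hp]
  have hpk : (0 : ℤ) < (p : ℤ) ^ (k + 1) := by positivity
  exact add_nonneg (Int.emod_nonneg _ hpk.ne') (mul_nonneg hpk.le (hν i))

theorem digit_replaceTail (hp : 0 < p) (ζ ν : I → ℤ) {j k : ℕ} (hjk : j ≤ k) :
    digit p j (replaceTail p k ζ ν) = digit p j ζ := by
  funext i
  simp only [digit, replaceTail_apply hp]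
  exact Int.emod_pow_add_pow_mul_ediv_pow_emod (by exact_mod_cast hp) _ _ (by omega)

theorem tailFrom_replaceTail (hp : 2 ≤ p) (k : ℕ) (ζ : I → ℤ) {ν : I → ℤ} (hν : dominant ν) :
    tailFrom p k (replaceTail p k ζ ν) = digit p k ζ + (p : ℤ) • ν := by
  rw [tailFrom_eq_ediv hp (dominant_replaceTail (by omega) k ζ hν)]
  funext i
  simp only [replaceTail_apply (by omega : 0 < p), Pi.add_apply, Pi.smul_apply, smul_eq_mul, digit]
  exact Int.emod_pow_succ_add_pow_succ_mul_ediv_pow (by omega) _ _ k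

theorem strictDom_digit_add_smul (hp : 0 < p) (k : ℕ) (ζ : I → ℤ) {ν : I → ℤ}
    (hν : strictDom ν) : strictDom (digit p k ζ + (p : ℤ) • ν) := fun i => by
  have hdigit := Int.emod_nonneg (ζ i / (p : ℤ) ^ k) (by omega : (p : ℤ) ≠ 0)
  have hνi := hν i
  simp only [Pi.add_apply, Pi.smul_apply, smul_eq_mul, digit]
  nlinarith

end Digits

theorem finsum_eq_finsum_finsum_snoc {X M : Type*} [AddCommMonoid M] {n : ℕ}
    (f : (Fin (n + 1) → X) → M) (hf : f.HasFiniteSupport) :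
    ∑ᶠ μ, f μ = ∑ᶠ (ν : X) (μ : Fin n → X), f (Fin.snoc μ ν) := by
  rw [← finsum_comp_equiv (Fin.snocEquiv fun _ => X)]
  exact finsum_curry _ (hf.preimage (Fin.snocEquiv _).injective.injOn)

section ChainCoeff

variable {I : Type*} (p : ℕ) (x : (I → ℤ) → (I → ℤ) → ℤ) (d : ℕ → I → ℤ)

def chainCoeff (k : ℕ) (t : I → ℤ) (μ : Fin (k + 1) → I → ℤ) : ℤ :=
  x (μ (Fin.last k)) t * ∏ j : Fin k, x (μ j.castSucc) (d j + (p : ℤ) • μ j.succ)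

theorem chainCoeff_zero (t : I → ℤ) (μ : Fin 1 → I → ℤ) :
    chainCoeff p x d 0 t μ = x (μ 0) t := by
  simp [chainCoeff, Fin.last]

theorem chainCoeff_snoc (k : ℕ) (t : I → ℤ) (μ : Fin (k + 1) → I → ℤ) (ν : I → ℤ) :
    chainCoeff p x d (k + 1) t (Fin.snoc μ ν) =
      x ν t * chainCoeff p x d k (d k + (p : ℤ) • ν) μ := by
  simp only [chainCoeff, Fin.prod_univ_castSucc, Fin.snoc_last, Fin.snoc_castSucc, Fin.succ_last,
    Fin.succ_castSucc, Fin.val_castSucc, Fin.val_last]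
  ring

theorem chainCoeff_congr {d' : ℕ → I → ℤ} {k : ℕ} (h : ∀ j < k, d j = d' j) :
    chainCoeff p x d k = chainCoeff p x d' k := by
  funext t μ
  simp only [chainCoeff]
  congr 1
  exact Finset.prod_congr rfl fun j _ => by rw [h j j.2]

theorem hasFiniteSupport_chainCoeff
    (hxfin : ∀ ζ : I → ℤ, (Function.support fun μ => x μ ζ).Finite) (k : ℕ) (t : I → ℤ) :
    (chainCoeff p x d k t).HasFiniteSupport := by
  unfold Function.HasFiniteSupport
  induction k generalizing t with
  | zero =>
    refine ((hxfin t).image fun ν _ => ν).subset fun μ hμ => ⟨μ 0, ?_, funext fun i => ?_⟩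
    · rwa [Function.mem_support, ← chainCoeff_zero p x d]
    · rw [Fin.fin_one_eq_zero i]
  | succ k ih =>
    have hsupp : Function.support (chainCoeff p x d (k + 1) t) ⊆
        ⋃ ν ∈ Function.support (x · t), (fun μ : Fin (k + 1) → I → ℤ => Fin.snoc μ ν) ''
          Function.support (chainCoeff p x d k (d k + (p : ℤ) • ν)) := fun μ hμ => by
      rw [← Fin.snoc_init_self μ, Function.mem_support, chainCoeff_snoc] at hμ
      exact Set.mem_biUnion (left_ne_zero_of_mul hμ)
        ⟨Fin.init μ, right_ne_zero_of_mul hμ, Fin.snoc_init_self μ⟩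
    exact ((hxfin t).biUnion fun ν _ => (ih _).image _).subset hsupp

theorem hasFiniteSupport_chainCoeff_smul {M : Type*} [AddCommMonoid M] [Module ℤ M]
    (hxfin : ∀ ζ : I → ℤ, (Function.support fun μ => x μ ζ).Finite) (k : ℕ) (t : I → ℤ)
    (g : (Fin (k + 1) → I → ℤ) → M) :
    (fun μ => chainCoeff p x d k t μ • g μ).HasFiniteSupport :=
  (hasFiniteSupport_chainCoeff p x d hxfin k t).subset (Function.support_smul_subset_left _ _)

end ChainCoeff

theorem Sh_succ_eq_finsum_chainCoeff {I : Type*} {p : ℕ} (hp : 2 ≤ p)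
    (x : (I → ℤ) → (I → ℤ) → ℤ) (S0 S1 : (I → ℤ) → AddMonoidAlgebra ℤ (I → ℤ))
    (hxfin : ∀ ζ : I → ℤ, (Function.support fun μ => x μ ζ).Finite)
    (hxsupp : ∀ μ ζ : I → ℤ, x μ ζ ≠ 0 → strictDom μ)
    (hx : ∀ ζ : I → ℤ, strictDom ζ → S1 ζ = ∑ᶠ μ : I → ℤ, x μ ζ • S0 μ)
    (k : ℕ) {ζ : I → ℤ} (hζ : dominant ζ) (htail : strictDom (tailFrom p k ζ)) :
    Sh p x S1 (k + 1) ζ = ∑ᶠ μ : Fin (k + 1) → I → ℤ,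
      chainCoeff p x (digit p · ζ) k (tailFrom p k ζ) μ • S0 (μ 0) := by
  induction k generalizing ζ with
  | zero =>
    have htail0 : tailFrom p 0 ζ = ζ := by simp [tailFrom_eq_ediv hp hζ]
    rw [htail0] at htail ⊢
    rw [Sh, hx ζ htail, ← finsum_comp_equiv (Equiv.funUnique (Fin 1) (I → ℤ)).symm]
    simp [chainCoeff_zero]
  | succ k ih =>
    set T := tailFrom p (k + 1) ζ
    have hterm : ∀ ν, x ν T • Sh p x S1 (k + 1) (replaceTail p k ζ ν) =
        ∑ᶠ μ : Fin (k + 1) → I → ℤ, chainCoeff p x (digit p · ζ) (k + 1) T (Fin.snoc μ ν) •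
          S0 ((Fin.snoc μ ν : Fin (k + 2) → I → ℤ) 0) := by
      intro ν
      by_cases hν : x ν T = 0
      · simp [chainCoeff_snoc, hν]
      have hνdom : strictDom ν := hxsupp ν T hν
      have hνnonneg : dominant ν := fun i => zero_le_one.trans (hνdom i)
      have htail' : strictDom (tailFrom p k (replaceTail p k ζ ν)) := by
        rw [tailFrom_replaceTail hp k ζ hνnonneg]
        exact strictDom_digit_add_smul (by omega) k ζ hνdom
      rw [ih (dominant_replaceTail (by omega) k ζ hνnonneg) htail',
        tailFrom_replaceTail hp k ζ hνnonneg,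
        chainCoeff_congr p x _ fun j hj => digit_replaceTail (by omega) ζ ν hj.le,
        smul_finsum' _ (hasFiniteSupport_chainCoeff_smul p x _ hxfin k _ _)]
      refine finsum_congr fun μ => ?_
      rw [chainCoeff_snoc, mul_smul, Fin.snoc_apply_zero]
    calc Sh p x S1 (k + 1 + 1) ζ = ∑ᶠ ν, x ν T • Sh p x S1 (k + 1) (replaceTail p k ζ ν) := rfl
      _ = _ := finsum_congr hterm
      _ = _ := (finsum_eq_finsum_finsum_snoc _
        (hasFiniteSupport_chainCoeff_smul p x _ hxfin (k + 1) T fun μ => S0 (μ 0))).symm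

theorem cor8_general {I : Type*} (p : ℕ) (hp : 2 ≤ p)
    (x : (I → ℤ) → (I → ℤ) → ℤ)
    (S S0 S1 : (I → ℤ) → AddMonoidAlgebra ℤ (I → ℤ))
    (hxfin : ∀ ζ : I → ℤ, (Function.support fun μ => x μ ζ).Finite)
    (hxsupp : ∀ μ ζ : I → ℤ, x μ ζ ≠ 0 → strictDom μ)
    (hx : ∀ ζ : I → ℤ, strictDom ζ → S1 ζ = ∑ᶠ μ : I → ℤ, x μ ζ • S0 μ)
    (hprop7 : ∀ (k : ℕ) (ζ : I → ℤ), dominant ζ → strictDom (digit p k ζ) →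
      (∀ j, k < j → digit p j ζ = 0) → S ζ = Sh p x S1 (k + 1) ζ)
    (k : ℕ) (ζ : I → ℤ) (hζ : dominant ζ)
    (htop : strictDom (digit p k ζ))
    (hzero : ∀ j, k < j → digit p j ζ = 0) :
    S ζ = ∑ᶠ μ : Fin (k + 1) → (I → ℤ),
      (x (μ (Fin.last k)) (digit p k ζ) *
        ∏ j : Fin k, x (μ j.castSucc) (digit p j.1 ζ + (p : ℤ) • μ j.succ)) • S0 (μ 0) := by
  have htail : tailFrom p k ζ = digit p k ζ := tailFrom_eq_digit hzero
  rw [hprop7 k ζ hζ htop hzero, Sh_succ_eq_finsum_chainCoeff hp x S0 S1 hxfin hxsupp hx k hζ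
    (htail ▸ htop), htail]
  rfl

/-- Corollary 8 of the paper: under the hypotheses of Proposition 7
(i.e. `S_ζ = S^{k+1}_ζ` for `ζ ∈ X^+_k`), for `k ≥ 0` and `ζ ∈ X^+_k` one has the
closed formula
`S_ζ = Σ_{μ_0,…,μ_k ∈ X^{++}} x_{μ_k,ζ^k} x_{μ_{k−1},ζ^{k−1}+pμ_k} ⋯ x_{μ_1,ζ^1+pμ_2} x_{μ_0,ζ^0+pμ_1} S⁰_{μ_0}`
(the sum over tuples `(μ_0, …, μ_k)`, finite since `x` has finite support). -/
theorem cor8 {I : Type*} [Fintype I] (p : ℕ) (hp : 2 ≤ p)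
    (x : (I → ℤ) → (I → ℤ) → ℤ)
    (S S0 S1 : (I → ℤ) → AddMonoidAlgebra ℤ (I → ℤ))
    (hS0 : LinearIndependent ℤ (fun μ : {μ : I → ℤ // strictDom μ} => S0 μ.1))
    (hxfin : ∀ ζ : I → ℤ, (Function.support fun μ => x μ ζ).Finite)
    (hxsupp : ∀ μ ζ : I → ℤ, x μ ζ ≠ 0 → strictDom μ)
    (hx : ∀ ζ : I → ℤ, strictDom ζ → S1 ζ = ∑ᶠ μ : I → ℤ, x μ ζ • S0 μ)
    (hprop7 : ∀ (k : ℕ) (ζ : I → ℤ), dominant ζ → strictDom (digit p k ζ) →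
      (∀ j, k < j → digit p j ζ = 0) → S ζ = Sh p x S1 (k + 1) ζ)
    (k : ℕ) (ζ : I → ℤ) (hζ : dominant ζ)
    (htop : strictDom (digit p k ζ))
    (hzero : ∀ j, k < j → digit p j ζ = 0) :
    S ζ = ∑ᶠ μ : Fin (k + 1) → (I → ℤ),
      (x (μ (Fin.last k)) (digit p k ζ) *
        ∏ j : Fin k, x (μ j.castSucc) (digit p j.1 ζ + (p : ℤ) • μ j.succ)) • S0 (μ 0) :=
  cor8_general p hp x S S0 S1 hxfin hxsupp hx hprop7 k ζ hζ htop hzero
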